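/- arXiv:1601.07005 — 3 statements merged into one kernel-verified Lean document; each statement's English description precedes it below -/
import Mathlib

section
/- Let A be a C*-algebra, I and J closed two-sided ideals of A, B a C*-subalgebra of I, and X a closed subspace of I such that BX ⊆ X, XI ⊆ X, XX* ⊆ B, X*X ⊆ I, the closed span of XX* equals B, and the closed span of X*X equals I. If B ∩ J = 0, then I ∩ J = 0. -/
/-!
For `a ∈ I ∩ J` and `x, y ∈ X`, the element `x a y*` lies in `B` (as `x a ∈ X`) and in `J`, so it
vanishes. Hence `(x* y) a (x'* y') = x* (y a x'*) y' = 0`, and by bilinearity and continuity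
`b a c = 0` for all `b, c` in the closed span `I` of `X* X`. Taking `b = a a*` and `c = a* a`
shows that `(a* a)³ = 0`, which forces `a = 0` by the C*-identity.
-/

/-- A closed two-sided (complex) ideal, as a subset. -/
def IsClosedTwoSidedIdealIn (A : Type*) [NonUnitalNormedRing A] [Module ℂ A]
    (J : Set A) : Prop :=
  IsClosed J ∧ (0 : A) ∈ J ∧ (∀ x ∈ J, ∀ y ∈ J, x + y ∈ J) ∧
    (∀ (c : ℂ), ∀ x ∈ J, c • x ∈ J) ∧ ∀ x ∈ J, ∀ a, a * x ∈ J ∧ x * a ∈ J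

namespace IsClosedTwoSidedIdealIn

variable {A : Type*} [NonUnitalNormedRing A] [Module ℂ A] {J : Set A}

theorem mul_mem_left (hJ : IsClosedTwoSidedIdealIn A J) (b : A) {a : A} (ha : a ∈ J) :
    b * a ∈ J :=
  (hJ.2.2.2.2 a ha b).1

theorem mul_mem_right (hJ : IsClosedTwoSidedIdealIn A J) {a : A} (ha : a ∈ J) (b : A) :
    a * b ∈ J :=
  (hJ.2.2.2.2 a ha b).2

end IsClosedTwoSidedIdealIn

theorem mul_mul_eq_zero_of_mem_closure_span {𝕜 A : Type*} [NontriviallyNormedField 𝕜]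
    [NonUnitalNormedRing A] [NormedSpace 𝕜 A] [IsScalarTower 𝕜 A A] [SMulCommClass 𝕜 A A]
    {S : Set A} {a : A} (h : ∀ b ∈ S, ∀ c ∈ S, b * a * c = 0) {b c : A}
    (hb : b ∈ closure (Submodule.span 𝕜 S : Set A))
    (hc : c ∈ closure (Submodule.span 𝕜 S : Set A)) : b * a * c = 0 := by
  have h_gen : ∀ c ∈ S, b * a * c = 0 := fun c hc => by
    simpa [mul_assoc] using ContinuousLinearMap.eqOn_closure_span
      (f := (ContinuousLinearMap.mul 𝕜 A).flip (a * c)) (g := 0)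
      (fun b hb => by simpa [mul_assoc] using h b hb c hc) hb
  exact ContinuousLinearMap.eqOn_closure_span
    (f := ContinuousLinearMap.mul 𝕜 A (b * a)) (g := 0) h_gen hc

theorem IsSelfAdjoint.eq_zero_of_mul_self_mul_eq_zero {A : Type*} [NonUnitalNormedRing A]
    [StarRing A] [CStarRing A] {v : A} (hv : IsSelfAdjoint v) (h : v * v * v = 0) : v = 0 := by
  have hvv : star (v * v) * (v * v) = 0 := by
    rw [star_mul, hv.star_eq, ← mul_assoc, h, zero_mul]
  have hv2 : star v * v = 0 := by
    rw [hv.star_eq]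
    exact CStarRing.star_mul_self_eq_zero_iff _ |>.mp hvv
  exact CStarRing.star_mul_self_eq_zero_iff _ |>.mp hv2

theorem ideal_inter_eq_zero_of_subalgebra_inter_eq_zero_general
    {A : Type*} [NonUnitalNormedRing A] [StarRing A] [CStarRing A]
    [NormedSpace ℂ A] [IsScalarTower ℂ A A] [SMulCommClass ℂ A A]
    (I J : Set A) (hI : IsClosedTwoSidedIdealIn A I) (hJ : IsClosedTwoSidedIdealIn A J)
    (B : NonUnitalStarSubalgebra ℂ A)
    (X : Submodule ℂ A)
    (hXmulI : ∀ x ∈ X, ∀ a ∈ I, x * a ∈ X)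
    (hXXstar : ∀ x ∈ X, ∀ y ∈ X, x * star y ∈ B)
    (hspanI : closure (↑(Submodule.span ℂ {z : A | ∃ x ∈ X, ∃ y ∈ X, z = star x * y}) : Set A)
      = I)
    (hBJ : ∀ b ∈ B, b ∈ J → b = 0) :
    ∀ a ∈ I, a ∈ J → a = 0 := by
  intro a haI haJ
  have hXaX : ∀ x ∈ X, ∀ y ∈ X, x * a * star y = 0 := fun x hx y hy =>
    hBJ _ (hXXstar _ (hXmulI x hx a haI) y hy)
      (hJ.mul_mem_right (hJ.mul_mem_left x haJ) (star y))
  have hIaI : ∀ b ∈ I, ∀ c ∈ I, b * a * c = 0 := by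
    rw [← hspanI]
    refine fun b hb c hc => mul_mul_eq_zero_of_mem_closure_span ?_ hb hc
    rintro _ ⟨x, -, y, hy, rfl⟩ _ ⟨x', hx', y', -, rfl⟩
    calc star x * y * a * (star x' * y') = star x * (y * a * star x') * y' := by noncomm_ring
      _ = 0 := by rw [hXaX y hy x' hx', mul_zero, zero_mul]
  have hcube : star a * a * (star a * a) * (star a * a) = 0 :=
    calc star a * a * (star a * a) * (star a * a)
        = star a * (a * star a * a * (star a * a)) := by noncomm_ring
      _ = 0 := by
        rw [hIaI _ (hI.mul_mem_right haI _) _ (hI.mul_mem_left _ haI), mul_zero]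
  exact (CStarRing.star_mul_self_eq_zero_iff a).mp
    ((IsSelfAdjoint.star_mul_self a).eq_zero_of_mul_self_mul_eq_zero hcube)

/-- If `X` is a `B`–`I` imprimitivity bimodule sitting inside the C*-algebra `A`
and `B ∩ J = 0`, then `I ∩ J = 0`. -/
theorem ideal_inter_eq_zero_of_subalgebra_inter_eq_zero
    {A : Type*} [NonUnitalNormedRing A] [StarRing A] [CStarRing A]
    [NormedSpace ℂ A] [IsScalarTower ℂ A A] [SMulCommClass ℂ A A] [StarModule ℂ A]
    [CompleteSpace A]
    (I J : Set A) (hI : IsClosedTwoSidedIdealIn A I) (hJ : IsClosedTwoSidedIdealIn A J)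
    (B : NonUnitalStarSubalgebra ℂ A) (hBclosed : IsClosed (B : Set A))
    (hBI : (B : Set A) ⊆ I)
    (X : Submodule ℂ A) (hXclosed : IsClosed (X : Set A)) (hXI : (X : Set A) ⊆ I)
    (hBX : ∀ b ∈ B, ∀ x ∈ X, b * x ∈ X)
    (hXmulI : ∀ x ∈ X, ∀ a ∈ I, x * a ∈ X)
    (hXXstar : ∀ x ∈ X, ∀ y ∈ X, x * star y ∈ B)
    (hXstarX : ∀ x ∈ X, ∀ y ∈ X, star x * y ∈ I)
    (hspanB : closure (↑(Submodule.span ℂ {z : A | ∃ x ∈ X, ∃ y ∈ X, z = x * star y}) : Set A)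
      = (B : Set A))
    (hspanI : closure (↑(Submodule.span ℂ {z : A | ∃ x ∈ X, ∃ y ∈ X, z = star x * y}) : Set A)
      = I)
    (hBJ : ∀ b ∈ B, b ∈ J → b = 0) :
    ∀ a ∈ I, a ∈ J → a = 0 :=
  ideal_inter_eq_zero_of_subalgebra_inter_eq_zero_general I J hI hJ B X hXmulI hXXstar hspanI hBJ
end

section
/- Let G = (G⁰, 𝒢¹, r, s) be an ultragraph and let 𝒢⁰ be the smallest subset of the power set of G⁰ containing all singletons {v} (v ∈ G⁰) and all ranges r(e) (e ∈ 𝒢¹), closed under finite unions and nonempty finite intersections. Then 𝒢⁰ equals the collection of all sets of the form (⋂_{e∈X₁} r(e)) ∪ ⋯ ∪ (⋂_{e∈Xₙ} r(e)) ∪ F, where each Xᵢ is a finite nonempty subset of 𝒢¹ and F is a finite subset of G⁰. -/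
/-!
Sets of the form `⋃ᵢ ⋂_{e ∈ Xᵢ} r e ∪ F` contain the generators of `𝒢⁰` and are closed under
unions, and under intersections by distributing: `⋂_{X} r ∩ ⋂_{Y} r = ⋂_{X ∪ Y} r`, while every
cross term involving `F` is finite. Conversely `𝒢⁰ ∪ {∅}` is closed under all finite unions and
nonempty finite intersections, hence contains every such set; nonemptiness then rules out `∅`.
-/

structure Ultragraph (V : Type*) (E : Type*) where
  s : E → V
  r : E → Set V
  r_nonempty : ∀ e, (r e).Nonempty

namespace Ultragraph

variable {V E : Type*}

/-- The smallest subset of `P(G⁰)` containing all singletons and all ranges `r(e)`,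
closed under finite unions and nonempty finite intersections. -/
inductive Lat (G : Ultragraph V E) : Set V → Prop
  | singleton (v : V) : Lat G {v}
  | range (e : E) : Lat G (G.r e)
  | union {A B : Set V} : Lat G A → Lat G B → Lat G (A ∪ B)
  | inter {A B : Set V} : Lat G A → Lat G B → (A ∩ B).Nonempty → Lat G (A ∩ B)

variable {G : Ultragraph V E} {A B : Set V}

theorem Lat.nonempty (h : G.Lat A) : A.Nonempty := by
  induction h with
  | singleton v => exact Set.singleton_nonempty v
  | range e => exact G.r_nonempty e
  | union _ _ hA _ => exact hA.mono Set.subset_union_left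
  | inter _ _ hAB _ _ => exact hAB

/-- The decomposition of the theorem, indexed by a finset of finsets instead of `Fin n → Finset E`
so that the families of two sets combine by `∪` and `Finset.image₂ (· ∪ ·)`. -/
def IsDecomposable (G : Ultragraph V E) (A : Set V) : Prop :=
  ∃ 𝒳 : Finset (Finset E), ∃ F : Set V, (∀ X ∈ 𝒳, X.Nonempty) ∧ F.Finite ∧
    A = (⋃ X ∈ 𝒳, ⋂ e ∈ X, G.r e) ∪ F

theorem isDecomposable_singleton (v : V) : G.IsDecomposable {v} :=
  ⟨∅, {v}, by simp, Set.finite_singleton v, by simp⟩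

theorem isDecomposable_range (e : E) : G.IsDecomposable (G.r e) :=
  ⟨{{e}}, ∅, by simp, Set.finite_empty, by simp⟩

theorem IsDecomposable.union (hA : G.IsDecomposable A) (hB : G.IsDecomposable B) :
    G.IsDecomposable (A ∪ B) := by
  classical
  obtain ⟨𝒳, F, h𝒳, hF, rfl⟩ := hA
  obtain ⟨𝒴, F', h𝒴, hF', rfl⟩ := hB
  refine ⟨𝒳 ∪ 𝒴, F ∪ F', ?_, hF.union hF', ?_⟩
  · simpa only [Finset.mem_union, or_imp, forall_and] using ⟨h𝒳, h𝒴⟩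
  · rw [Finset.set_biUnion_union, Set.union_union_union_comm]

theorem biUnion_biInter_image₂_union [DecidableEq E] (𝒳 𝒴 : Finset (Finset E)) (f : E → Set V) :
    ⋃ Z ∈ Finset.image₂ (· ∪ ·) 𝒳 𝒴, ⋂ e ∈ Z, f e =
      (⋃ X ∈ 𝒳, ⋂ e ∈ X, f e) ∩ ⋃ Y ∈ 𝒴, ⋂ e ∈ Y, f e := by
  simp_rw [← Finset.mem_coe, Finset.coe_image₂, Set.biUnion_image2, Set.iUnion₂_inter_iUnion₂,
    Finset.coe_union, Set.biInter_union]

theorem IsDecomposable.inter (hA : G.IsDecomposable A) (hB : G.IsDecomposable B) :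
    G.IsDecomposable (A ∩ B) := by
  classical
  obtain ⟨𝒳, F, h𝒳, hF, hAF⟩ := hA
  obtain ⟨𝒴, F', h𝒴, hF', hBF'⟩ := hB
  refine ⟨Finset.image₂ (· ∪ ·) 𝒳 𝒴, F ∩ B ∪ A ∩ F', ?_,
    (hF.inter_of_left B).union (hF'.inter_of_right A), ?_⟩
  · simp only [Finset.mem_image₂]
    rintro _ ⟨X, hX, Y, -, rfl⟩
    exact (h𝒳 X hX).mono Finset.subset_union_left
  · rw [biUnion_biInter_image₂_union]
    ext x
    simp only [hAF, hBF', Set.mem_inter_iff, Set.mem_union]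
    tauto

theorem Lat.isDecomposable (h : G.Lat A) : G.IsDecomposable A := by
  induction h with
  | singleton v => exact isDecomposable_singleton v
  | range e => exact isDecomposable_range e
  | union _ _ hA hB => exact hA.union hB
  | inter _ _ _ hA hB => exact hA.inter hB

def LatOrEmpty (G : Ultragraph V E) (A : Set V) : Prop :=
  A = ∅ ∨ G.Lat A

theorem LatOrEmpty.union (hA : G.LatOrEmpty A) (hB : G.LatOrEmpty B) : G.LatOrEmpty (A ∪ B) := by
  rcases hA with rfl | hA
  · rwa [Set.empty_union]
  rcases hB with rfl | hB
  · rw [Set.union_empty]; exact Or.inr hA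
  exact Or.inr (hA.union hB)

theorem LatOrEmpty.inter (hA : G.LatOrEmpty A) (hB : G.LatOrEmpty B) : G.LatOrEmpty (A ∩ B) := by
  rcases hA with rfl | hA
  · exact Or.inl (Set.empty_inter B)
  rcases hB with rfl | hB
  · exact Or.inl (Set.inter_empty A)
  rcases (A ∩ B).eq_empty_or_nonempty with hAB | hAB
  · exact Or.inl hAB
  · exact Or.inr (hA.inter hB hAB)

theorem latOrEmpty_biUnion {ι : Type*} (s : Finset ι) {f : ι → Set V}
    (h : ∀ i ∈ s, G.LatOrEmpty (f i)) : G.LatOrEmpty (⋃ i ∈ s, f i) := by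
  rw [← Finset.sup_set_eq_biUnion]
  exact Finset.sup_induction (Or.inl rfl) (fun _ hA _ hB => hA.union hB) h

theorem latOrEmpty_biInter {ι : Type*} {s : Finset ι} (hs : s.Nonempty) {f : ι → Set V}
    (h : ∀ i ∈ s, G.LatOrEmpty (f i)) : G.LatOrEmpty (⋂ i ∈ s, f i) := by
  rw [← Finset.inf_set_eq_iInter, ← Finset.inf'_eq_inf hs]
  exact Finset.inf'_induction hs f (fun _ hA _ hB => hA.inter hB) h

theorem latOrEmpty_of_finite {F : Set V} (hF : F.Finite) : G.LatOrEmpty F := by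
  rw [← Set.biUnion_of_singleton F, ← hF.coe_toFinset, Finset.set_biUnion_coe]
  exact latOrEmpty_biUnion _ fun v _ => Or.inr (Lat.singleton v)

theorem IsDecomposable.latOrEmpty (hA : G.IsDecomposable A) : G.LatOrEmpty A := by
  obtain ⟨𝒳, F, h𝒳, hF, rfl⟩ := hA
  refine LatOrEmpty.union (latOrEmpty_biUnion 𝒳 fun X hX => ?_) (latOrEmpty_of_finite hF)
  exact latOrEmpty_biInter (h𝒳 X hX) fun e _ => Or.inr (Lat.range e)

theorem exists_fin_decomposition_iff :
    (∃ (n : ℕ) (Xs : Fin n → Finset E) (F : Finset V),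
      (∀ i, (Xs i).Nonempty) ∧ A.Nonempty ∧ A = (⋃ i, ⋂ e ∈ Xs i, G.r e) ∪ (F : Set V)) ↔
      G.IsDecomposable A ∧ A.Nonempty := by
  classical
  constructor
  · rintro ⟨n, Xs, F, hXs, hA, rfl⟩
    exact ⟨⟨Finset.univ.image Xs, F, by simpa using hXs, F.finite_toSet, by simp⟩, hA⟩
  · rintro ⟨⟨𝒳, F, h𝒳, hF, rfl⟩, hA⟩
    refine ⟨𝒳.card, fun i => 𝒳.equivFin.symm i, hF.toFinset, fun i => h𝒳 _ (Subtype.prop _), hA,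
      ?_⟩
    rw [hF.coe_toFinset, 𝒳.equivFin.symm.surjective.iUnion_comp
      (fun X : 𝒳 => ⋂ e ∈ (X : Finset E), G.r e), Set.iUnion_subtype]

theorem lat_iff_exists_decomposition_general
    (G : Ultragraph V E) (A : Set V) :
    G.Lat A ↔ ∃ (n : ℕ) (Xs : Fin n → Finset E) (F : Finset V),
      (∀ i, (Xs i).Nonempty) ∧ A.Nonempty ∧
      A = (⋃ i, ⋂ e ∈ Xs i, G.r e) ∪ (F : Set V) := by
  rw [exists_fin_decomposition_iff]
  exact ⟨fun h => ⟨h.isDecomposable, h.nonempty⟩,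
    fun ⟨hA, hne⟩ => hA.latOrEmpty.resolve_left hne.ne_empty⟩

/-- Tomforde's description of `𝒢⁰` (Lemma 2.12). -/
theorem lat_iff_exists_decomposition [Countable V] [Countable E]
    (G : Ultragraph V E) (A : Set V) :
    G.Lat A ↔ ∃ (n : ℕ) (Xs : Fin n → Finset E) (F : Finset V),
      (∀ i, (Xs i).Nonempty) ∧ A.Nonempty ∧
      A = (⋃ i, ⋂ e ∈ Xs i, G.r e) ∪ (F : Set V) :=
  lat_iff_exists_decomposition_general G A

end Ultragraph
end

section
/- Let (X, μ) be a σ-finite measure space and f : D → R a measurable bijection (μ-a.e.) between measurable sets D, R ⊆ X with measurable inverse f⁻¹, such that the pushforward measure μ∘f on D and μ∘f⁻¹ on R are each absolutely continuous with respect to μ. Then μ restricted to D is absolutely continuous with respect to μ∘f, μ restricted to R is absolutely continuous with respect to μ∘f⁻¹, the Radon–Nikodym derivatives Φ_f = d(μ∘f)/dμ and Φ_{f⁻¹} = d(μ∘f⁻¹)/dμ are strictly positive μ-a.e. on D and R respectively, and Φ_f(x)·Φ_{f⁻¹}(f(x)) = 1 for μ-almost every x ∈ D. -/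
/-!
Let `ν₁`, `ν₂` be the pushforwards of `μ|_R` along `f⁻¹` and of `μ|_D` along `f`, and `Φ₁`, `Φ₂`
their densities with respect to `μ`. As `ν₁ ≪ μ|_D` and `ν₂ ≪ μ|_R`, we have `ν₁ = Φ₁ • μ|_D` and
`ν₂ = Φ₂ • μ|_R`. Pushing `ν₂` back along `f⁻¹` recovers `μ|_D`, while pushing `Φ₂ • μ|_R` along
`f⁻¹` gives `(Φ₂ ∘ f) • ν₁`. Hence `μ|_D = (Φ₁ · Φ₂ ∘ f) • μ|_D`, and uniqueness of densities
forces `Φ₁ · Φ₂ ∘ f = 1` a.e. on `D`.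
-/

open MeasureTheory
open scoped ENNReal

namespace MeasureTheory.Measure

variable {α β : Type*} [MeasurableSpace α] [MeasurableSpace β] {f : α → β} {g : β → α}

lemma map_map_eq_self_of_ae_leftInverse {μ : Measure α} (hf : Measurable f) (hg : Measurable g)
    (h : ∀ᵐ x ∂μ, g (f x) = x) : (μ.map f).map g = μ := by
  rw [map_map hg hf]
  exact (map_congr (g := id) h).trans map_id

lemma absolutelyContinuous_map_of_ae_leftInverse {μ : Measure α} {ν : Measure β}
    (hf : Measurable f) (hg : Measurable g) (h : ∀ᵐ x ∂μ, g (f x) = x) (hac : μ.map f ≪ ν) :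
    μ ≪ ν.map g :=
  map_map_eq_self_of_ae_leftInverse hf hg h ▸ hac.map hg

lemma map_withDensity_comp {ν : Measure β} {ρ : α → ℝ≥0∞} (hg : Measurable g)
    (hρ : Measurable ρ) : (ν.withDensity (ρ ∘ g)).map g = (ν.map g).withDensity ρ := by
  ext s hs
  rw [map_apply hg hs, withDensity_apply _ (hg hs), withDensity_apply _ hs,
    setLIntegral_map hs hρ hg, Function.comp_def]

lemma map_withDensity_of_ae_rightInverse {ν : Measure β} {ρ : β → ℝ≥0∞} (hf : Measurable f)
    (hg : Measurable g) (hρ : Measurable ρ) (h : ∀ᵐ y ∂ν, f (g y) = y) :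
    (ν.withDensity ρ).map g = (ν.map g).withDensity (ρ ∘ f) := by
  have hρ_eq : ρ =ᵐ[ν] (ρ ∘ f) ∘ g := by
    filter_upwards [h] with y hy
    simp [hy]
  rw [withDensity_congr_ae hρ_eq, map_withDensity_comp hg (hρ.comp hf)]

lemma withDensity_rnDeriv_restrict_eq {μ ν : Measure α} [HaveLebesgueDecomposition ν μ]
    {s : Set α} (hs : MeasurableSet s) (hac : ν ≪ μ.restrict s) :
    (μ.restrict s).withDensity (ν.rnDeriv μ) = ν := by
  have hν_on_s : ν.restrict s = ν := restrict_eq_self_of_ae_mem (hac.ae_le (ae_restrict_mem hs))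
  rw [← restrict_withDensity hs,
    withDensity_rnDeriv_eq _ _ (hac.trans restrict_le_self.absolutelyContinuous), hν_on_s]

lemma ae_eq_one_of_withDensity_eq_self {μ : Measure α} [SigmaFinite μ] {ρ : α → ℝ≥0∞}
    (hρ : AEMeasurable ρ μ) (h : μ.withDensity ρ = μ) : ρ =ᵐ[μ] 1 := by
  rwa [← withDensity_eq_iff_of_sigmaFinite hρ (g := 1) measurable_one.aemeasurable,
    withDensity_one]

end MeasureTheory.Measure

theorem rnDeriv_pushforward_pos_and_mul_eq_one_general
    {X : Type*} [MeasurableSpace X] (μ : Measure X) [SigmaFinite μ]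
    (D R : Set X) (hD : MeasurableSet D) (hR : MeasurableSet R)
    (f finv : X → X) (hf : Measurable f) (hfinv : Measurable finv)
    (h1 : ∀ᵐ x ∂μ.restrict R, f (finv x) = x)
    (h2 : ∀ᵐ x ∂μ.restrict D, finv (f x) = x)
    (hac1 : (μ.restrict R).map finv ≪ μ.restrict D)
    (hac2 : (μ.restrict D).map f ≪ μ.restrict R) :
    μ.restrict D ≪ (μ.restrict R).map finv ∧
    μ.restrict R ≪ (μ.restrict D).map f ∧
    (∀ᵐ x ∂μ.restrict D, 0 < ((μ.restrict R).map finv).rnDeriv μ x) ∧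
    (∀ᵐ x ∂μ.restrict R, 0 < ((μ.restrict D).map f).rnDeriv μ x) ∧
    ∀ᵐ x ∂μ.restrict D,
      ((μ.restrict R).map finv).rnDeriv μ x * ((μ.restrict D).map f).rnDeriv μ (f x) = 1 := by
  set ν₁ := (μ.restrict R).map finv
  set ν₂ := (μ.restrict D).map f
  have hD_ac : μ.restrict D ≪ ν₁ :=
    Measure.absolutelyContinuous_map_of_ae_leftInverse hf hfinv h2 hac2
  have hR_ac : μ.restrict R ≪ ν₂ :=
    Measure.absolutelyContinuous_map_of_ae_leftInverse hfinv hf h1 hac1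
  have hν₁_ac : ν₁ ≪ μ := hac1.trans Measure.restrict_le_self.absolutelyContinuous
  have hν₂_ac : ν₂ ≪ μ := hac2.trans Measure.restrict_le_self.absolutelyContinuous
  refine ⟨hD_ac, hR_ac, hD_ac.ae_le (Measure.rnDeriv_pos hν₁_ac),
    hR_ac.ae_le (Measure.rnDeriv_pos hν₂_ac), ?_⟩
  have hΦ₁ := Measure.measurable_rnDeriv ν₁ μ
  have hΦ₂ := Measure.measurable_rnDeriv ν₂ μ
  have hμD : (μ.restrict D).withDensity (ν₁.rnDeriv μ * ν₂.rnDeriv μ ∘ f) = μ.restrict D :=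
    calc (μ.restrict D).withDensity (ν₁.rnDeriv μ * ν₂.rnDeriv μ ∘ f)
        = ν₁.withDensity (ν₂.rnDeriv μ ∘ f) := by
          rw [withDensity_mul _ hΦ₁ (hΦ₂.comp hf),
            Measure.withDensity_rnDeriv_restrict_eq hD hac1]
      _ = ((μ.restrict R).withDensity (ν₂.rnDeriv μ)).map finv :=
          (Measure.map_withDensity_of_ae_rightInverse hf hfinv hΦ₂ h1).symm
      _ = μ.restrict D := by
          rw [Measure.withDensity_rnDeriv_restrict_eq hR hac2,
            Measure.map_map_eq_self_of_ae_leftInverse hf hfinv h2]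
  exact Measure.ae_eq_one_of_withDensity_eq_self (hΦ₁.mul (hΦ₂.comp hf)).aemeasurable hμD

/-- Basic properties of the Radon–Nikodym derivatives of the two pushforward measures
attached to an a.e. measurable bijection `f : D → R` with measurable inverse. -/
theorem rnDeriv_pushforward_pos_and_mul_eq_one
    {X : Type*} [MeasurableSpace X] (μ : Measure X) [SigmaFinite μ]
    (D R : Set X) (hD : MeasurableSet D) (hR : MeasurableSet R)
    (f finv : X → X) (hf : Measurable f) (hfinv : Measurable finv)
    (hmf : Set.MapsTo f D R) (hmfinv : Set.MapsTo finv R D)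
    (h1 : ∀ᵐ x ∂μ.restrict R, f (finv x) = x)
    (h2 : ∀ᵐ x ∂μ.restrict D, finv (f x) = x)
    (hac1 : (μ.restrict R).map finv ≪ μ.restrict D)
    (hac2 : (μ.restrict D).map f ≪ μ.restrict R) :
    μ.restrict D ≪ (μ.restrict R).map finv ∧
    μ.restrict R ≪ (μ.restrict D).map f ∧
    (∀ᵐ x ∂μ.restrict D, 0 < ((μ.restrict R).map finv).rnDeriv μ x) ∧
    (∀ᵐ x ∂μ.restrict R, 0 < ((μ.restrict D).map f).rnDeriv μ x) ∧
    ∀ᵐ x ∂μ.restrict D,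
      ((μ.restrict R).map finv).rnDeriv μ x * ((μ.restrict D).map f).rnDeriv μ (f x) = 1 :=
  rnDeriv_pushforward_pos_and_mul_eq_one_general μ D R hD hR f finv hf hfinv h1 h2 hac1 hac2
end
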